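/- arXiv:math/0208091 — 4 statements merged into one kernel-verified Lean document; each statement's English description precedes it below -/
import Mathlib

section
/- Let A be a module over the big Steenrod algebra relation system in characteristic 2: operations Sq^i for i ∈ ℤ that are additive, satisfy Sq^i(λc) = λ²Sq^i(c), and the instability condition Sq^i(x) = 0 for i > deg(x) on a graded module M. Then for the free unstable module B·e^n on one generator e^n of degree n, the map f sending e^n to e^n + Sq^0(e^n) induces a morphism of unstable B-modules that is injective. -/
/-!
STATEMENT 4: Over the big Steenrod algebra `B` in characteristic 2 (generated by
`Sq^i`, `i ∈ ℤ`, modulo the Adem relations), an unstable `B`-module is a graded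
`B`-module (grading encoded by an internal direct sum decomposition into
subgroups `gr n`, `n ∈ ℤ`) with `Sq^i : M^n → M^{n+i}` and `Sq^i = 0` on `M^n`
for `i > n`.  For the free unstable `B`-module `B·eⁿ` on one generator `eⁿ` of
degree `n`, the map sending `eⁿ` to `eⁿ + Sq^0(eⁿ)` induces a morphism of
unstable `B`-modules (a grading-preserving `B`-linear map), and this morphism is
injective.
-/

noncomputable section

def intChoose (a b : ℤ) : ℕ :=
  if 0 ≤ b ∧ b ≤ a then a.toNat.choose b.toNat else 0

def ademRel : FreeAlgebra (ZMod 2) ℤ → FreeAlgebra (ZMod 2) ℤ → Prop := fun x y =>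
  ∃ i j : ℤ, i < 2 * j ∧ x = FreeAlgebra.ι (ZMod 2) i * FreeAlgebra.ι (ZMod 2) j ∧
    y = ∑ k ∈ Finset.Icc (i - j + 1) (i / 2),
          (intChoose (j - k - 1) (i - 2 * k) : ZMod 2) •
            (FreeAlgebra.ι (ZMod 2) (i + j - k) * FreeAlgebra.ι (ZMod 2) k)

/-- The big Steenrod algebra over `𝔽₂`. -/
abbrev BigSteenrod : Type := RingQuot ademRel

def Sq (i : ℤ) : BigSteenrod := RingQuot.mkRingHom ademRel (FreeAlgebra.ι (ZMod 2) i)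

/-- An unstable module over the big Steenrod algebra: a `ℤ`-graded `B`-module
such that `Sq^i` raises degrees by `i` and vanishes on classes of degree `< i`. -/
structure UnstableBMod where
  M : Type
  [acg : AddCommGroup M]
  [mod : Module BigSteenrod M]
  gr : ℤ → AddSubgroup M
  internal : DirectSum.IsInternal gr
  sq_mem : ∀ (i n : ℤ) (x : M), x ∈ gr n → Sq i • x ∈ gr (n + i)
  instab : ∀ (i n : ℤ) (x : M), x ∈ gr n → n < i → Sq i • x = 0

attribute [instance] UnstableBMod.acg UnstableBMod.mod

/-- `X` is the free unstable `B`-module on one generator `e` of degree `n`: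
for any unstable `B`-module `Y` and any `y ∈ Y` of degree `n` there is a unique
morphism of unstable `B`-modules (grading-preserving `B`-linear map) sending
`e` to `y`. -/
def IsFreeUnstableOn (n : ℤ) (X : UnstableBMod) (e : X.M) : Prop :=
  e ∈ X.gr n ∧
    ∀ (Y : UnstableBMod) (y : Y.M), y ∈ Y.gr n →
      ∃! f : X.M →ₗ[BigSteenrod] Y.M,
        (∀ (k : ℤ) (x : X.M), x ∈ X.gr k → f x ∈ Y.gr k) ∧ f e = y

open scoped DirectSum
set_option maxHeartbeats 1000000
set_option synthInstance.maxHeartbeats 400000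

namespace S4

lemma Sq_eq_mkAlgHom (i : ℤ) :
    Sq i = RingQuot.mkAlgHom (ZMod 2) ademRel (FreeAlgebra.ι (ZMod 2) i) := by
  rw [Sq, ← RingQuot.mkAlgHom_coe (ZMod 2) ademRel]; rfl

lemma adem (i j : ℤ) (h : i < 2 * j) :
    (Sq i * Sq j : BigSteenrod) =
      ∑ k ∈ Finset.Icc (i - j + 1) (i / 2),
        (intChoose (j - k - 1) (i - 2 * k) : ZMod 2) • (Sq (i + j - k) * Sq k) := by
  have hrel : ademRel (FreeAlgebra.ι (ZMod 2) i * FreeAlgebra.ι (ZMod 2) j)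
      (∑ k ∈ Finset.Icc (i - j + 1) (i / 2),
          (intChoose (j - k - 1) (i - 2 * k) : ZMod 2) •
            (FreeAlgebra.ι (ZMod 2) (i + j - k) * FreeAlgebra.ι (ZMod 2) k)) :=
    ⟨i, j, h, rfl, rfl⟩
  have := RingQuot.mkAlgHom_rel (ZMod 2) hrel
  simpa only [map_mul, map_sum, map_smul, ← Sq_eq_mkAlgHom] using this

variable (X : UnstableBMod)

instance zmod2 : Module (ZMod 2) X.M := Module.compHom _ (algebraMap (ZMod 2) BigSteenrod)

lemma zsmul_def (c : ZMod 2) (x : X.M) :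
    c • x = (algebraMap (ZMod 2) BigSteenrod c) • x := rfl

instance : IsScalarTower (ZMod 2) BigSteenrod X.M := by
  constructor
  intro c b x
  rw [Algebra.smul_def, mul_smul, zsmul_def]

/-- shift-and-apply operator on `ℕ →₀ X.M`. -/
def U (φ : X.M →+ X.M) : (ℕ →₀ X.M) →+ (ℕ →₀ X.M) :=
  (Finsupp.mapDomain.addMonoidHom (· + 1)).comp (Finsupp.mapRange.addMonoidHom φ)

lemma U_apply_zero (φ : X.M →+ X.M) (v : ℕ →₀ X.M) : U X φ v 0 = 0 := by
  have : (0 : ℕ) ∉ Set.range (· + 1 : ℕ → ℕ) := by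
    rintro ⟨a, ha⟩; simp at ha
  simp [U, Finsupp.mapDomain_notin_range _ _ this]

lemma U_apply_succ (φ : X.M →+ X.M) (v : ℕ →₀ X.M) (l : ℕ) :
    U X φ v (l + 1) = φ (v l) := by
  have hinj : Function.Injective (· + 1 : ℕ → ℕ) := add_left_injective 1
  simp [U, Finsupp.mapDomain_apply hinj]

lemma U_single (φ : X.M →+ X.M) (l : ℕ) (x : X.M) :
    U X φ (Finsupp.single l x) = Finsupp.single (l + 1) (φ x) := by
  simp [U, Finsupp.mapDomain_single]

/-- `Sq i` followed by shift, as a `ZMod 2`-linear endomorphism. -/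
def S (i : ℤ) : Module.End (ZMod 2) (ℕ →₀ X.M) where
  toFun := U X (DistribMulAction.toAddMonoidHom X.M (Sq i))
  map_add' := map_add _
  map_smul' := by
    intro c v
    ext l
    cases l with
    | zero => simp [U_apply_zero]
    | succ l =>
        simp only [U_apply_succ, RingHom.id_apply, Finsupp.smul_apply,
          DistribMulAction.toAddMonoidHom_apply]
        rw [zsmul_def, zsmul_def, ← mul_smul, ← Algebra.commutes, mul_smul]

lemma S_apply_zero (i : ℤ) (v : ℕ →₀ X.M) : S X i v 0 = 0 := U_apply_zero X _ v

lemma S_apply_succ (i : ℤ) (v : ℕ →₀ X.M) (l : ℕ) : S X i v (l + 1) = Sq i • v l :=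
  U_apply_succ X _ v l

lemma S_single (i : ℤ) (l : ℕ) (x : X.M) :
    S X i (Finsupp.single l x) = Finsupp.single (l + 1) (Sq i • x) := U_single X _ l x

def A : FreeAlgebra (ZMod 2) ℤ →ₐ[ZMod 2] Module.End (ZMod 2) (ℕ →₀ X.M) :=
  FreeAlgebra.lift (ZMod 2) (S X)

lemma hA : ∀ ⦃x y⦄, ademRel x y → A X x = A X y := by
  rintro _ _ ⟨i, j, hij, rfl, rfl⟩
  simp only [A, map_mul, map_sum, map_smul, FreeAlgebra.lift_ι_apply]
  apply LinearMap.ext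
  intro v
  ext l
  have hr : ∀ l : ℕ,
      ((∑ k ∈ Finset.Icc (i - j + 1) (i / 2),
        (intChoose (j - k - 1) (i - 2 * k) : ZMod 2) • (S X (i + j - k) * S X k)) v) l
      = ∑ k ∈ Finset.Icc (i - j + 1) (i / 2),
        (intChoose (j - k - 1) (i - 2 * k) : ZMod 2) • ((S X (i + j - k)) ((S X k) v) l) := by
    intro l
    rw [LinearMap.sum_apply, Finsupp.finset_sum_apply]
    refine Finset.sum_congr rfl fun k _ => ?_
    rw [LinearMap.smul_apply, Finsupp.smul_apply, Module.End.mul_apply]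
  match l with
  | 0 =>
      rw [Module.End.mul_apply, hr, S_apply_zero]
      simp [S_apply_zero, smul_zero]
  | 1 =>
      rw [Module.End.mul_apply, hr, S_apply_succ, S_apply_zero]
      simp [S_apply_succ, S_apply_zero, smul_zero]
  | (l + 2) =>
      rw [Module.End.mul_apply, hr, S_apply_succ, S_apply_succ]
      have h1 : ∀ k : ℤ, (S X (i + j - k)) ((S X k) v) (l + 1 + 1)
          = Sq (i + j - k) • Sq k • v l := by
        intro k; rw [S_apply_succ, S_apply_succ]
      simp only [h1]
      rw [← mul_smul]
      have h2 : ∀ k : ℤ, ∀ c : ZMod 2,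
          c • (Sq (i + j - k) • Sq k • v l) = (c • (Sq (i + j - k) * Sq k)) • v l := by
        intro k c
        rw [← mul_smul, smul_assoc]
      simp only [h2]
      rw [← Finset.sum_smul, ← adem i j hij]

def rho : BigSteenrod →ₐ[ZMod 2] Module.End (ZMod 2) (ℕ →₀ X.M) :=
  RingQuot.liftAlgHom (ZMod 2) ⟨A X, hA X⟩

def Ymod : Module BigSteenrod (ℕ →₀ X.M) := Module.compHom _ (rho X).toRingHom

lemma Ysmul_Sq (i : ℤ) (v : ℕ →₀ X.M) :
    @HSMul.hSMul BigSteenrod (ℕ →₀ X.M) (ℕ →₀ X.M)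
      (@instHSMul BigSteenrod (ℕ →₀ X.M)
        (Ymod X).toDistribMulAction.toMulAction.toSMul) (Sq i) v = S X i v := by
  have h0 : @HSMul.hSMul BigSteenrod (ℕ →₀ X.M) (ℕ →₀ X.M)
      (@instHSMul BigSteenrod (ℕ →₀ X.M)
        (Ymod X).toDistribMulAction.toMulAction.toSMul) (Sq i) v = rho X (Sq i) v := rfl
  rw [h0, rho, Sq_eq_mkAlgHom, RingQuot.liftAlgHom_mkAlgHom_apply, A,
    FreeAlgebra.lift_ι_apply]

/-- The grading on `ℕ →₀ X.M`. -/
def grY (d : ℤ) : AddSubgroup (ℕ →₀ X.M) where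
  carrier := {v | ∀ l, v l ∈ X.gr d}
  zero_mem' := fun l => by simpa using zero_mem (X.gr d)
  add_mem' := fun {a b} ha hb l => by
    rw [Finsupp.add_apply]; exact add_mem (ha l) (hb l)
  neg_mem' := fun {a} ha l => by
    rw [Finsupp.neg_apply]; exact neg_mem (ha l)

lemma mem_grY {d : ℤ} {v : ℕ →₀ X.M} : v ∈ grY X d ↔ ∀ l, v l ∈ X.gr d := Iff.rfl

attribute [irreducible] grY

def evHom (d : ℤ) (l : ℕ) : grY X d →+ X.gr d where
  toFun v := ⟨(v : ℕ →₀ X.M) l, (mem_grY X).mp v.2 l⟩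
  map_zero' := by ext; simp
  map_add' a b := by ext; simp

def evDS (l : ℕ) : (⨁ d, grY X d) →+ ⨁ d, X.gr d :=
  DirectSum.toAddMonoid fun d => (DirectSum.of (fun d => X.gr d) d).comp (evHom X d l)

lemma coe_evDS (l : ℕ) (w : ⨁ d, grY X d) :
    (DirectSum.coeAddMonoidHom (fun d => X.gr d)) (evDS X l w)
      = (DirectSum.coeAddMonoidHom (grY X) w) l := by
  induction w using DirectSum.induction_on with
  | zero =>
      rw [(evDS X l).map_zero, (DirectSum.coeAddMonoidHom (fun d => X.gr d)).map_zero,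
        (DirectSum.coeAddMonoidHom (grY X)).map_zero]
      simp
  | of d v =>
      rw [evDS, DirectSum.toAddMonoid_of]
      simp [DirectSum.coeAddMonoidHom_of, evHom]
  | add a b ha hb =>
      rw [(evDS X l).map_add, (DirectSum.coeAddMonoidHom (fun d => X.gr d)).map_add,
        (DirectSum.coeAddMonoidHom (grY X)).map_add, Finsupp.add_apply, ha, hb]

lemma evDS_apply (l : ℕ) (w : ⨁ d, grY X d) (d : ℤ) :
    ((evDS X l w) d : X.M) = ((w d : ℕ →₀ X.M)) l := by
  induction w using DirectSum.induction_on with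
  | zero =>
      rw [(evDS X l).map_zero]
      simp
  | of d' v =>
      rw [evDS, DirectSum.toAddMonoid_of]
      by_cases h : d' = d
      · subst h
        rw [AddMonoidHom.comp_apply, DirectSum.of_eq_same, DirectSum.of_eq_same]
        rfl
      · rw [AddMonoidHom.comp_apply, DirectSum.of_eq_of_ne _ _ _ (Ne.symm h),
          DirectSum.of_eq_of_ne _ _ _ (Ne.symm h)]
        simp
  | add a b ha hb =>
      rw [(evDS X l).map_add, DirectSum.add_apply, DirectSum.add_apply, AddSubgroup.coe_add,
        AddSubgroup.coe_add, Finsupp.add_apply, ha, hb]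

def snHom (d : ℤ) (l : ℕ) : X.gr d →+ grY X d where
  toFun x := ⟨Finsupp.single l (x : X.M), (mem_grY X).mpr (by
    intro l'
    rw [Finsupp.single_apply]
    split
    · exact x.2
    · exact zero_mem _)⟩
  map_zero' := by ext; simp
  map_add' a b := by ext; simp [Finsupp.single_add]

def snDS (l : ℕ) : (⨁ d, X.gr d) →+ ⨁ d, grY X d :=
  DirectSum.toAddMonoid fun d => (DirectSum.of (fun d => grY X d) d).comp (snHom X d l)

lemma coe_snDS (l : ℕ) (w : ⨁ d, X.gr d) :
    (DirectSum.coeAddMonoidHom (grY X)) (snDS X l w)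
      = Finsupp.single l ((DirectSum.coeAddMonoidHom (fun d => X.gr d)) w) := by
  induction w using DirectSum.induction_on with
  | zero =>
      rw [(snDS X l).map_zero, (DirectSum.coeAddMonoidHom (grY X)).map_zero,
        (DirectSum.coeAddMonoidHom (fun d => X.gr d)).map_zero]
      simp
  | of d v =>
      rw [snDS, DirectSum.toAddMonoid_of]
      simp [DirectSum.coeAddMonoidHom_of, snHom]
  | add a b ha hb =>
      rw [(snDS X l).map_add, (DirectSum.coeAddMonoidHom (grY X)).map_add,
        (DirectSum.coeAddMonoidHom (fun d => X.gr d)).map_add, ha, hb, Finsupp.single_add]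

instance (priority := 10000) instZDG : Zero (⨁ d, grY X d) := inferInstance
instance (priority := 10000) instZDX : Zero (⨁ d, (X.gr d)) := inferInstance
instance (priority := 10000) : OfNat (⨁ d, grY X d) 0 := ⟨(instZDG X).zero⟩
instance (priority := 10000) : OfNat (⨁ d, (X.gr d)) 0 := ⟨(instZDX X).zero⟩

set_option maxSynthPendingDepth 2

lemma internalY : DirectSum.IsInternal (grY X) := by
  constructor
  · rw [injective_iff_map_eq_zero]
    intro w hw
    have h0 : ∀ l, evDS X l w = 0 := by
      intro l
      apply X.internal.injective
      rw [coe_evDS, hw, (DirectSum.coeAddMonoidHom (fun d => X.gr d)).map_zero]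
      simp
    refine DFinsupp.ext fun d => ?_
    have : ((w d : ℕ →₀ X.M)) = 0 := by
      ext l
      rw [← evDS_apply, h0 l]
      simp
    exact Subtype.ext (by simpa using this)
  · intro v
    induction v using Finsupp.induction with
    | zero => exact ⟨0, (DirectSum.coeAddMonoidHom (grY X)).map_zero⟩
    | single_add l x v hl hx ih =>
        obtain ⟨w, hw⟩ := X.internal.surjective x
        obtain ⟨u, hu⟩ := ih
        exact ⟨snDS X l w + u,
          by rw [(DirectSum.coeAddMonoidHom (grY X)).map_add, coe_snDS, hw, hu]⟩

/-- The shifted module `ℕ →₀ X.M` as an unstable B-module. -/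
def Ydef : UnstableBMod where
  M := ℕ →₀ X.M
  acg := inferInstance
  mod := Ymod X
  gr := grY X
  internal := internalY X
  sq_mem := by
    intro i m v hv
    have hS : S X i v ∈ grY X (m + i) := by
      rw [mem_grY]
      intro l
      cases l with
      | zero => rw [S_apply_zero]; exact zero_mem _
      | succ l => rw [S_apply_succ]; exact X.sq_mem i m (v l) ((mem_grY X).mp hv l)
    rw [Ysmul_Sq X i v]
    exact hS
  instab := by
    intro i m v hv h
    have hS : S X i v = 0 := by
      ext l
      cases l with
      | zero => rw [S_apply_zero]; rfl
      | succ l =>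
          rw [S_apply_succ, X.instab i m (v l) ((mem_grY X).mp hv l) h]
          rfl
    rw [Ysmul_Sq X i v]
    exact hS

def ysingle (l : ℕ) (x : X.M) : (Ydef X).M := Finsupp.single l x

lemma ysingle_mem {d : ℤ} (l : ℕ) {x : X.M} (hx : x ∈ X.gr d) :
    ysingle X l x ∈ (Ydef X).gr d := by
  have : (Finsupp.single l x : ℕ →₀ X.M) ∈ grY X d := by
    rw [mem_grY]
    intro l'
    rw [Finsupp.single_apply]
    split
    · exact hx
    · exact zero_mem _
  exact this

lemma sq_ysingle (i : ℤ) (l : ℕ) (x : X.M) :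
    Sq i • ysingle X l x = ysingle X (l + 1) (Sq i • x) := by
  rw [show (Sq i • ysingle X l x : (Ydef X).M) = S X i (ysingle X l x) from Ysmul_Sq X i _]
  exact S_single X i l x

def toF (v : (Ydef X).M) : ℕ →₀ X.M := v

def G0 (g : X.M →ₗ[BigSteenrod] X.M) : (Ydef X).M →+ (Ydef X).M := U X g.toAddMonoidHom


def sigma0 : (ℕ →₀ X.M) →+ X.M := Finsupp.liftAddHom fun _ => AddMonoidHom.id X.M

lemma sigma0_single (l : ℕ) (x : X.M) : sigma0 X (Finsupp.single l x) = x := by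
  simp [sigma0]

lemma sigma0_S (i : ℤ) (v : ℕ →₀ X.M) : sigma0 X (S X i v) = Sq i • sigma0 X v := by
  have h : (sigma0 X).comp (U X (DistribMulAction.toAddMonoidHom X.M (Sq i)))
      = (DistribMulAction.toAddMonoidHom X.M (Sq i)).comp (sigma0 X) := by
    refine Finsupp.addHom_ext fun l x => ?_
    simp [U_single, sigma0_single]
  exact DFunLike.congr_fun h v

lemma sigma0_gr (k : ℤ) (v : ℕ →₀ X.M) (hv : v ∈ grY X k) : sigma0 X v ∈ X.gr k := by
  rw [sigma0, Finsupp.liftAddHom_apply, Finsupp.sum]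
  exact sum_mem fun l _ => (mem_grY X).mp hv l

lemma U_U (φ ψ : X.M →+ X.M) (h : ∀ x, φ (ψ x) = ψ (φ x)) (v : ℕ →₀ X.M) :
    U X φ (U X ψ v) = U X ψ (U X φ v) := by
  have hh : (U X φ).comp (U X ψ) = (U X ψ).comp (U X φ) := by
    refine Finsupp.addHom_ext fun l x => ?_
    simp [U_single, h]
  exact DFunLike.congr_fun hh v

lemma G0_Sq (g : X.M →ₗ[BigSteenrod] X.M) (i : ℤ) (v : (Ydef X).M) :
    G0 X g (Sq i • v) = Sq i • G0 X g v := by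
  rw [show (Sq i • v : (Ydef X).M) = S X i v from Ysmul_Sq X i v,
    show (Sq i • G0 X g v : (Ydef X).M) = S X i (G0 X g v) from Ysmul_Sq X i (G0 X g v)]
  exact U_U X g.toAddMonoidHom (DistribMulAction.toAddMonoidHom X.M (Sq i))
    (fun x => map_smul g (Sq i) x) v

lemma G0_ysingle (g : X.M →ₗ[BigSteenrod] X.M) (l : ℕ) (x : X.M) :
    G0 X g (ysingle X l x) = ysingle X (l + 1) (g x) := U_single X _ l x

lemma G0_apply_zero (g : X.M →ₗ[BigSteenrod] X.M) (v : (Ydef X).M) :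
    toF X (G0 X g v) 0 = 0 := U_apply_zero X _ (toF X v)

lemma G0_apply_succ (g : X.M →ₗ[BigSteenrod] X.M) (v : (Ydef X).M) (l : ℕ) :
    toF X (G0 X g v) (l + 1) = g (toF X v l) := U_apply_succ X _ (toF X v) l

lemma G0_mem (g : X.M →ₗ[BigSteenrod] X.M)
    (hg : ∀ (k : ℤ) (x : X.M), x ∈ X.gr k → g x ∈ X.gr k)
    (k : ℤ) (v : (Ydef X).M) (hv : v ∈ (Ydef X).gr k) : G0 X g v ∈ (Ydef X).gr k := by
  have : U X g.toAddMonoidHom v ∈ grY X k := by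
    rw [mem_grY]
    intro l
    cases l with
    | zero => show (U X g.toAddMonoidHom (toF X v)) 0 ∈ X.gr k; rw [U_apply_zero]; exact zero_mem _
    | succ l =>
        show (U X g.toAddMonoidHom (toF X v)) (l + 1) ∈ X.gr k
        rw [U_apply_succ]
        exact hg k _ ((mem_grY X).mp hv l)
  exact this

lemma lift_commute {M N : Type} [AddCommGroup M] [AddCommGroup N]
    [Module BigSteenrod M] [Module BigSteenrod N]
    (h : M →+ N) (hSq : ∀ (i : ℤ) (x : M), h (Sq i • x) = Sq i • h x)
    (b : BigSteenrod) (x : M) : h (b • x) = b • h x := by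
  obtain ⟨a, rfl⟩ := RingQuot.mkAlgHom_surjective (ZMod 2) ademRel b
  refine FreeAlgebra.induction (ZMod 2) ℤ
    (motive := fun a => ∀ x : M,
      h (RingQuot.mkAlgHom (ZMod 2) ademRel a • x)
        = RingQuot.mkAlgHom (ZMod 2) ademRel a • h x) ?_ ?_ ?_ ?_ a x
  · intro r x
    rw [AlgHom.commutes]
    rcases (by decide : ∀ c : ZMod 2, c = 0 ∨ c = 1) r with hr | hr <;> subst hr
    · simp
    · simp
  · intro i x
    rw [← Sq_eq_mkAlgHom]
    exact hSq i x
  · intro a b iha ihb x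
    rw [map_mul, mul_smul, iha, ihb, mul_smul]
  · intro a b iha ihb x
    rw [map_add, add_smul, h.map_add, iha, ihb, add_smul]

def mkBLinear {M N : Type} [AddCommGroup M] [AddCommGroup N]
    [Module BigSteenrod M] [Module BigSteenrod N]
    (h : M →+ N) (hSq : ∀ (i : ℤ) (x : M), h (Sq i • x) = Sq i • h x) :
    M →ₗ[BigSteenrod] N where
  toFun := h
  map_add' := h.map_add
  map_smul' := fun b x => lift_commute h hSq b x

end S4

open S4 in
theorem statement4 (n : ℤ) (X : UnstableBMod) (e : X.M)
    (hfree : IsFreeUnstableOn n X e) :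
    ∃ f : X.M →ₗ[BigSteenrod] X.M,
      (∀ (k : ℤ) (x : X.M), x ∈ X.gr k → f x ∈ X.gr k) ∧
      f e = e + Sq 0 • e ∧
      Function.Injective f := by
  obtain ⟨he, hUP⟩ := hfree
  have ht : Sq 0 • e ∈ X.gr n := by
    have := X.sq_mem 0 n e he
    rwa [add_zero] at this
  obtain ⟨g, ⟨hggr, hge⟩, hguniq⟩ := hUP X (Sq 0 • e) ht
  obtain ⟨f, ⟨hfgr, hfe⟩, hfuniq⟩ := hUP X (e + Sq 0 • e) ((X.gr n).add_mem he ht)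
  have hf_eq : f = LinearMap.id + g := by
    refine (hfuniq (LinearMap.id + g) ⟨?_, ?_⟩).symm
    · intro k x hx
      rw [LinearMap.add_apply, LinearMap.id_apply]
      exact add_mem hx (hggr k x hx)
    · rw [LinearMap.add_apply, LinearMap.id_apply, hge]
  refine ⟨f, hfgr, hfe, ?_⟩
  refine (injective_iff_map_eq_zero f).mpr ?_
  intro x hx
  have hgx : g x = -x := by
    rw [hf_eq, LinearMap.add_apply, LinearMap.id_apply] at hx
    exact eq_neg_of_add_eq_zero_right hx
  -- the auxiliary unstable module
  obtain ⟨φ, ⟨hφgr, hφe⟩, hφuniq⟩ := hUP (Ydef X) (ysingle X 0 e) (ysingle_mem X 0 he)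
  have hσSq : ∀ (i : ℤ) (v : (Ydef X).M), sigma0 X (Sq i • v) = Sq i • sigma0 X v := by
    intro i v
    rw [show (Sq i • v : (Ydef X).M) = S X i v from Ysmul_Sq X i v]
    exact sigma0_S X i v
  let σ : (Ydef X).M →ₗ[BigSteenrod] X.M := mkBLinear (sigma0 X) hσSq
  obtain ⟨idm, hidm, hiduniq⟩ := hUP X e he
  have hσφ : σ.comp φ = LinearMap.id := by
    have h1 : σ.comp φ = idm := by
      refine hiduniq _ ⟨?_, ?_⟩
      · intro k x hx
        exact sigma0_gr X k (φ x) (hφgr k x hx)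
      · show σ (φ e) = e
        rw [hφe]
        exact sigma0_single X 0 e
    have h2 : LinearMap.id = idm := hiduniq _ ⟨fun k x hx => hx, rfl⟩
    rw [h1, h2]
  let G : (Ydef X).M →ₗ[BigSteenrod] (Ydef X).M := mkBLinear (G0 X g) (G0_Sq X g)
  obtain ⟨ψ, hψ, hψuniq⟩ := hUP (Ydef X) (ysingle X 1 (Sq 0 • e)) (ysingle_mem X 1 ht)
  have h3 : φ.comp g = ψ := by
    refine hψuniq _ ⟨fun k x hx => hφgr k (g x) (hggr k x hx), ?_⟩
    show φ (g e) = _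
    rw [hge, map_smul, hφe, sq_ysingle]
  have h4 : G.comp φ = ψ := by
    refine hψuniq _ ⟨fun k x hx => G0_mem X g hggr k (φ x) (hφgr k x hx), ?_⟩
    show G0 X g (φ e) = _
    rw [hφe, G0_ysingle, hge]
  have hcomm : φ (g x) = G0 X g (φ x) := by
    have h5 : φ.comp g = G.comp φ := h3.trans h4.symm
    have := DFunLike.congr_fun h5 x
    exact this
  have hGx : φ x = - G0 X g (φ x) := by
    rw [hgx, map_neg] at hcomm
    rw [← hcomm, neg_neg]
  have hφx : ∀ l : ℕ, toF X (φ x) l = 0 := by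
    have hGxl : ∀ l : ℕ, toF X (φ x) l = - toF X (G0 X g (φ x)) l := by
      intro l
      have := congrArg (fun u : (Ydef X).M => toF X u l) hGx
      exact this.trans (Finsupp.neg_apply (G0 X g (φ x)) l)
    intro l
    induction l with
    | zero => rw [hGxl 0, G0_apply_zero, neg_zero]
    | succ l ih => rw [hGxl (l + 1), G0_apply_succ, ih, map_zero, neg_zero]
  have hφx0 : φ x = 0 := by
    have : toF X (φ x) = 0 := Finsupp.ext hφx
    exact this
  have hσφx := DFunLike.congr_fun hσφ x
  rw [LinearMap.comp_apply, LinearMap.id_apply, hφx0, map_zero] at hσφx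
  exact hσφx.symm
end
end

section
/- In the big Steenrod algebra B in characteristic 2, the left ideal generated by (1 + Sq^0) is a two-sided ideal, and it contains all elements Sq^i with i < 0. -/
/-!
STATEMENT 6: In the big Steenrod algebra `B` in characteristic 2 (the `𝔽₂`-algebra
generated by symbols `Sq^i`, `i ∈ ℤ`, modulo the Adem relations
`Sq^i Sq^j = Σ_k C(j-k-1, i-2k) Sq^{i+j-k} Sq^k` for `i < 2j`; over `𝔽₂` the
Frobenius twist on scalars is trivial), the left ideal generated by `1 + Sq^0`
is a two-sided ideal, and it contains all elements `Sq^i` with `i < 0`.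
-/

noncomputable section

namespace Statement6Aux

open Finset

lemma sq_eq (i : ℤ) :
    Sq i = RingQuot.mkAlgHom (ZMod 2) ademRel (FreeAlgebra.ι (ZMod 2) i) := by
  rw [Sq, ← RingQuot.mkAlgHom_coe (ZMod 2) ademRel]
  rfl

lemma adem (i j : ℤ) (h : i < 2 * j) :
    Sq i * Sq j = ∑ k ∈ Finset.Icc (i - j + 1) (i / 2),
      (intChoose (j - k - 1) (i - 2 * k) : ZMod 2) • (Sq (i + j - k) * Sq k) := by
  have h1 : ademRel (FreeAlgebra.ι (ZMod 2) i * FreeAlgebra.ι (ZMod 2) j)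
      (∑ k ∈ Finset.Icc (i - j + 1) (i / 2),
        (intChoose (j - k - 1) (i - 2 * k) : ZMod 2) •
          (FreeAlgebra.ι (ZMod 2) (i + j - k) * FreeAlgebra.ι (ZMod 2) k)) :=
    ⟨i, j, h, rfl, rfl⟩
  have h2 := RingQuot.mkAlgHom_rel (ZMod 2) h1
  simp only [map_mul, map_sum, map_smul] at h2
  simp only [sq_eq]
  exact h2

lemma add_self (a : BigSteenrod) : a + a = 0 := by
  have h : ((1 : ZMod 2) + 1) • a = a + a := by rw [add_smul, one_smul]
  have h2 : ((1 : ZMod 2) + 1) = 0 := by decide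
  rw [← h, h2, zero_smul]

local notation "I" => Ideal.span ({1 + Sq 0} : Set BigSteenrod)

lemma gen_mem : (1 + Sq 0) ∈ I :=
  Ideal.subset_span (Set.mem_singleton _)

lemma sq_neg_mem' (n : ℕ) : Sq (-(n : ℤ) - 1) ∈ I := by
  induction n using Nat.strong_induction_on with
  | _ n ih =>
    set i : ℤ := -(n : ℤ) - 1 with hidef
    have hi : i < 0 := by omega
    have hadem := adem i 0 (by omega)
    have hterm : ∀ k ∈ Finset.Icc (i - 0 + 1) (i / 2),
        (intChoose (0 - k - 1) (i - 2 * k) : ZMod 2) • (Sq (i + 0 - k) * Sq k) ∈ I := by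
      intro k hk
      rw [Finset.mem_Icc] at hk
      have hk2 : i / 2 < 0 := by omega
      obtain ⟨m, hm⟩ : ∃ m : ℕ, k = -(m : ℤ) - 1 := ⟨(-k - 1).toNat, by omega⟩
      have hmn : m < n := by omega
      have hmem : Sq k ∈ I := by rw [hm]; exact ih m hmn
      exact Submodule.smul_of_tower_mem _ _ (Ideal.mul_mem_left _ _ hmem)
    have hsum : Sq i * Sq 0 ∈ I := by
      rw [hadem]; exact Submodule.sum_mem _ hterm
    have heq : Sq i * (1 + Sq 0) + Sq i * Sq 0 = Sq i := by
      rw [mul_add, mul_one, add_assoc, add_self, add_zero]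
    rw [← heq]
    exact add_mem (Ideal.mul_mem_left _ _ gen_mem) hsum

lemma sq_neg_mem (i : ℤ) (hi : i < 0) : Sq i ∈ I := by
  obtain ⟨n, rfl⟩ : ∃ n : ℕ, i = -(n : ℤ) - 1 := ⟨(-i - 1).toNat, by omega⟩
  exact sq_neg_mem' n

lemma gen_mul_sq_mem (j : ℤ) : (1 + Sq 0) * Sq j ∈ I := by
  rcases lt_trichotomy j 0 with hj | hj | hj
  · rw [add_mul, one_mul]
    exact add_mem (sq_neg_mem j hj) (Ideal.mul_mem_left _ _ (sq_neg_mem j hj))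
  · subst hj
    have : (1 + Sq 0) * Sq 0 = Sq 0 * (1 + Sq 0) := by
      rw [add_mul, one_mul, mul_add, mul_one]
    rw [this]
    exact Ideal.mul_mem_left _ _ gen_mem
  · have hadem := adem 0 j (by omega)
    have hset : Finset.Icc (0 - j + 1) ((0 : ℤ) / 2)
        = insert (0 : ℤ) (Finset.Icc (0 - j + 1) (-1)) := by
      ext x
      simp only [Finset.mem_Icc, Finset.mem_insert]
      omega
    have hnotmem : (0 : ℤ) ∉ Finset.Icc (0 - j + 1) (-1) := by
      simp
    rw [hset, Finset.sum_insert hnotmem] at hadem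
    have hcoef : intChoose (j - 0 - 1) (0 - 2 * 0) = 1 := by
      rw [intChoose, if_pos]
      · norm_num
      · constructor <;> omega
    rw [hcoef] at hadem
    have hrest : ∑ k ∈ Finset.Icc (0 - j + 1) (-1 : ℤ),
        (intChoose (j - k - 1) (0 - 2 * k) : ZMod 2) • (Sq (0 + j - k) * Sq k) ∈ I := by
      refine Submodule.sum_mem _ fun k hk => ?_
      rw [Finset.mem_Icc] at hk
      exact Submodule.smul_of_tower_mem _ _
        (Ideal.mul_mem_left _ _ (sq_neg_mem k (by omega)))
    have h0j : (0 : ℤ) + j - 0 = j := by ring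
    rw [h0j] at hadem
    have heq : (1 + Sq 0) * Sq j
        = Sq j * (1 + Sq 0) + ∑ k ∈ Finset.Icc (0 - j + 1) (-1 : ℤ),
            (intChoose (j - k - 1) (0 - 2 * k) : ZMod 2) • (Sq (0 + j - k) * Sq k) := by
      rw [add_mul, one_mul, hadem, mul_add, mul_one]
      push_cast
      rw [one_smul]
      exact (add_assoc _ _ _).symm
    rw [heq]
    exact add_mem (Ideal.mul_mem_left _ _ gen_mem) hrest

lemma gen_mul_mem (b : BigSteenrod) : (1 + Sq 0) * b ∈ I := by
  obtain ⟨a, rfl⟩ := RingQuot.mkAlgHom_surjective (ZMod 2) ademRel b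
  induction a using FreeAlgebra.induction with
  | grade0 r =>
    rw [AlgHom.commutes, ← Algebra.commutes]
    exact Ideal.mul_mem_left _ _ gen_mem
  | grade1 x =>
    rw [← sq_eq]
    exact gen_mul_sq_mem x
  | add a b ha hb =>
    rw [map_add, mul_add]
    exact add_mem ha hb
  | mul a b ha hb =>
    rw [map_mul, ← mul_assoc]
    obtain ⟨c, hc⟩ := Submodule.mem_span_singleton.mp ha
    rw [← hc, smul_eq_mul, mul_assoc]
    exact Ideal.mul_mem_left _ _ hb

end Statement6Aux

theorem statement6 :
    (∀ x ∈ Ideal.span ({1 + Sq 0} : Set BigSteenrod), ∀ b : BigSteenrod,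
        x * b ∈ Ideal.span ({1 + Sq 0} : Set BigSteenrod)) ∧
    (∀ i : ℤ, i < 0 → Sq i ∈ Ideal.span ({1 + Sq 0} : Set BigSteenrod)) := by
  constructor
  · intro x hx b
    obtain ⟨c, hc⟩ := Submodule.mem_span_singleton.mp hx
    rw [← hc, smul_eq_mul, mul_assoc]
    exact Ideal.mul_mem_left _ _ (Statement6Aux.gen_mul_mem b)
  · intro i hi
    exact Statement6Aux.sq_neg_mem i hi
end
end

section
/- With E a Hopf operad and K an E-coalgebra, the division functor on free algebras satisfies E(V) ⊘ K ≅ E(V ⊗ K), naturally in the dg-module V; i.e. the left adjoint of Hom_F(K, −) sends the free E-algebra on V to the free E-algebra on V ⊗ K. -/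
noncomputable section

open scoped TensorProduct

/-- (Part of the data of) an operad in modules over `F`: a sequence of modules
of operations with unit and symmetric group actions. -/
structure Operad (F : Type) [Field F] where
  ops : ℕ → Type
  [acg : ∀ r, AddCommGroup (ops r)]
  [mod : ∀ r, Module F (ops r)]
  unit : ops 1
  act : ∀ r, Equiv.Perm (Fin r) → ops r →ₗ[F] ops r
  act_one : ∀ r, act r 1 = LinearMap.id
  act_mul : ∀ r (g h : Equiv.Perm (Fin r)), act r (g * h) = act r g ∘ₗ act r h

attribute [instance] Operad.acg Operad.mod

variable {F : Type} [Field F]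

/-- A `P`-algebra structure: each operation gives a multilinear map, the unit
acts as the identity, and evaluation is equivariant. -/
structure AlgOn (P : Operad F) (A : Type) [AddCommGroup A] [Module F A] where
  eval : ∀ r, P.ops r →ₗ[F] MultilinearMap F (fun _ : Fin r => A) A
  unit_eval : ∀ a : A, eval 1 P.unit (fun _ => a) = a
  act_eval : ∀ (r : ℕ) (g : Equiv.Perm (Fin r)) (ρ : P.ops r) (v : Fin r → A),
    eval r (P.act r g ρ) v = eval r ρ fun i => v (g i)

open CategoryTheory

/-- The category of `P`-algebras: objects are modules with a `P`-algebra
structure, morphisms are linear maps commuting with all the operations. -/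
structure EAlg (P : Operad F) where
  carrier : Type
  [acg : AddCommGroup carrier]
  [mod : Module F carrier]
  str : AlgOn P carrier

attribute [instance] EAlg.acg EAlg.mod

instance (P : Operad F) : Category (EAlg P) where
  Hom A B := {f : A.carrier →ₗ[F] B.carrier //
    ∀ (r : ℕ) (ρ : P.ops r) (v : Fin r → A.carrier),
      f (A.str.eval r ρ v) = B.str.eval r ρ fun i => f (v i)}
  id A := ⟨LinearMap.id, fun _ _ _ => rfl⟩
  comp f g := ⟨g.1 ∘ₗ f.1, fun r ρ v => by simp [f.2, g.2]⟩

/-- The forgetful functor from `P`-algebras to modules. -/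
def forgetE (P : Operad F) : EAlg P ⥤ ModuleCat.{0} F where
  obj A := ModuleCat.of F A.carrier
  map f := ModuleCat.ofHom f.1

open CategoryTheory.Limits CategoryTheory.MonoidalClosed CategoryTheory.MonoidalCategory

/-!
STATEMENT 16: With `E` a (Hopf) operad and `K` an `E`-coalgebra, the division
functor on free algebras satisfies `E(V) ⊘ K ≅ E(V ⊗ K)` naturally in the
module `V`: i.e. the left adjoint `D = − ⊘ K` of the functor
`H = Hom_F(K, −)` on `E`-algebras sends the free `E`-algebra on `V` to the free
`E`-algebra on `V ⊗ K`.  The free algebra functor is characterized as the left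
adjoint of the forgetful functor, `H` is characterized by having underlying
module functor the internal hom `Hom_F(K, −)`, and the conclusion is the
natural isomorphism of functors `Free ⋙ D ≅ (− ⊗ K) ⋙ Free`.
-/

theorem statement16 (P : Operad F) (K : Type) [AddCommGroup K] [Module F K]
    (Free : ModuleCat.{0} F ⥤ EAlg P) (adjFree : Free ⊣ forgetE P)
    (H : EAlg P ⥤ EAlg P)
    (hH : (H ⋙ forgetE P) ≅ (forgetE P ⋙ ihom (ModuleCat.of F K)))
    (D : EAlg P ⥤ EAlg P) (adjD : D ⊣ H) :
    Nonempty ((Free ⋙ D) ≅ (tensorRight (ModuleCat.of F K) ⋙ Free)) := by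
  classical
  let KM := ModuleCat.of F K
  let e : tensorLeft KM ≅ tensorRight KM :=
    NatIso.ofComponents (fun V => β_ KM V) (fun f => by
      simp [BraidedCategory.braiding_naturality_right])
  have adj2 : (tensorRight KM ⋙ Free) ⊣ (forgetE P ⋙ ihom KM) :=
    ((ihom.adjunction KM).ofNatIsoLeft e).comp adjFree
  have adj1 : (Free ⋙ D) ⊣ (forgetE P ⋙ ihom KM) :=
    ((adjFree.comp adjD).ofNatIsoRight hH)
  exact ⟨adj1.leftAdjointUniq adj2⟩
end
end

section
/- In the normalized chain complex of the bar construction W(r) of the symmetric group Σ_r, the cochain ε_r defined by ε_r(w_0,...,w_d) = ±1 if (w_0(1),...,w_d(1)) is a permutation of (1,...,r) and 0 otherwise (supported in degree d = r−1) is a cocycle: ε_r ∘ δ = 0, where δ is the simplicial differential. -/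
/-!
STATEMENT 17: In the normalized chain complex of the bar construction `W(r)` of
the symmetric group `Σ_r`, the cochain `ε_r` defined by
`ε_r(w_0,...,w_d) = ±1` if `(w_0(1),...,w_d(1))` is a permutation of `(1,...,r)`
and `0` otherwise (supported in degree `d = r - 1`) is a cocycle: `ε_r ∘ δ = 0`,
where `δ` is the simplicial differential (the alternating sum of the face maps,
vanishing in degree 0).  Simplices are modelled as lists of permutations, a
degree-`d` simplex being a list of length `d+1`; `(w_0(1),...,w_d(1))` is a
permutation of `(1,...,r)` iff the list has length `r` and the values `w_i(0)`
(on the first element of `Fin r`) are pairwise distinct.  The sign convention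
`±` is quantified existentially.
-/

noncomputable section

namespace S17

variable (F : Type) [Field F] (r : ℕ)

lemma map_eraseIdx {α β : Type*} (f : α → β) :
    ∀ (l : List α) (i : ℕ), (l.eraseIdx i).map f = (l.map f).eraseIdx i := by
  intro l
  induction l with
  | nil => intro i; simp [List.eraseIdx]
  | cons a t ih =>
    intro i
    cases i with
    | zero => simp [List.eraseIdx]
    | succ n => simp [List.eraseIdx, ih n]

/-- The 0/1 matrix of a length-`r` list of values in `Fin r`. -/
def rowM (v : List (Fin r)) (hv : v.length = r) : Matrix (Fin r) (Fin r) F :=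
  Matrix.of fun i c => if v.get (Fin.cast hv.symm i) = c then (1 : F) else 0

/-- The sign: determinant of the 0/1 matrix, or 0 if the length is wrong. -/
def s (v : List (Fin r)) : F :=
  if hv : v.length = r then (rowM F r v hv).det else 0

lemma s_pm (v : List (Fin r)) (hv : v.length = r) (hnd : v.Nodup) :
    s F r v = 1 ∨ s F r v = -1 := by
  have hinj : Function.Injective (fun i : Fin r => v.get (Fin.cast hv.symm i)) := by
    intro a b hab
    have := List.nodup_iff_injective_get.mp hnd hab
    simpa [Fin.ext_iff] using this
  have hbij := (Finite.injective_iff_bijective).mp hinj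
  set σ : Equiv.Perm (Fin r) := Equiv.ofBijective _ hbij with hσ
  have hM : rowM F r v hv = Equiv.Perm.permMatrix F σ := by
    ext i c
    simp [rowM, Equiv.Perm.permMatrix, PEquiv.toMatrix_apply, Equiv.toPEquiv_apply,
      hσ, Equiv.ofBijective_apply, eq_comm, Option.mem_def]
  have : s F r v = ((Equiv.Perm.sign σ : ℤ) : F) := by
    rw [s, dif_pos hv, hM, Matrix.det_permutation]
  rcases Int.units_eq_one_or (Equiv.Perm.sign σ) with h | h <;>
    simp [this, h]

lemma s_zero_of_not_nodup (v : List (Fin r)) (hnd : ¬ v.Nodup) : s F r v = 0 := by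
  by_cases hv : v.length = r
  · rw [s, dif_pos hv]
    rw [List.nodup_iff_injective_get] at hnd
    simp only [Function.Injective, not_forall] at hnd
    obtain ⟨a, b, hab, hne⟩ := hnd
    refine Matrix.det_zero_of_row_eq (M := rowM F r v hv)
      (i := Fin.cast hv a) (j := Fin.cast hv b) ?_ ?_
    · simpa [Fin.ext_iff] using fun h => hne (by exact Fin.ext h)
    · funext c
      simp only [List.get_eq_getElem] at hab
      simp [rowM, hab]
  · rw [s, dif_neg hv]

lemma s_zero_of_length_ne (v : List (Fin r)) (hv : v.length ≠ r) : s F r v = 0 := by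
  rw [s, dif_neg hv]

/-- The key determinant identity: the alternating sum of signs of face lists vanishes. -/
lemma key (v : List (Fin r)) (hv : v.length = r + 1) :
    ∑ i ∈ Finset.range v.length, (-1 : F) ^ i * s F r (v.eraseIdx i) = 0 := by
  -- the big (r+1) × (r+1) matrix: first column of ones, then the 0/1 matrix of v
  set B : Matrix (Fin (r + 1)) (Fin (r + 1)) F :=
    Matrix.of (fun i => Fin.cons 1
      (fun c => if v.get (Fin.cast hv.symm i) = c then (1 : F) else 0)) with hB
  have hB0 : ∀ i, B i 0 = 1 := fun i => rfl
  have hBsucc : ∀ i (c : Fin r),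
      B i c.succ = if v.get (Fin.cast hv.symm i) = c then (1 : F) else 0 := fun i c => rfl
  -- column 0 is the sum of the other columns, hence det B = 0
  have hdet : B.det = 0 := by
    have h := Matrix.det_updateCol_sum B 0 (fun i => if i = 0 then 0 else 1)
    have hupd : (B.updateCol 0 fun k =>
        ∑ i : Fin (r + 1), (if i = 0 then (0:F) else 1) • B k i) = B := by
      ext i c
      rw [Matrix.updateCol_apply]
      split_ifs with h0
      · subst h0
        rw [Fin.sum_univ_succ]
        simp only [if_pos rfl, zero_smul, zero_add]
        have : ∀ c : Fin r, (if c.succ = (0 : Fin (r+1)) then (0:F) else 1) • B i c.succ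
            = if v.get (Fin.cast hv.symm i) = c then (1 : F) else 0 := by
          intro c
          rw [if_neg (Fin.succ_ne_zero c), one_smul, hBsucc]
        rw [Finset.sum_congr rfl (fun c _ => this c)]
        rw [Finset.sum_ite_eq Finset.univ (v.get (Fin.cast hv.symm i)) (fun _ => (1:F))]
        simp [hB0]
      · rfl
    rw [hupd] at h
    simpa using h
  -- cofactor expansion along the first column
  rw [Matrix.det_succ_column_zero] at hdet
  have hterm : ∀ i : Fin (r + 1),
      (B.submatrix i.succAbove Fin.succ).det = s F r (v.eraseIdx (i : ℕ)) := by
    intro i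
    have hlen : (v.eraseIdx (i : ℕ)).length = r := by
      rw [List.length_eraseIdx, if_pos (show (i:ℕ) < v.length by rw [hv]; exact i.isLt)]
      omega
    rw [s, dif_pos hlen]
    congr 1
    ext j c
    rw [Matrix.submatrix_apply, hBsucc]
    have hget : (v.eraseIdx (i : ℕ)).get (Fin.cast hlen.symm j)
        = v.get (Fin.cast hv.symm (i.succAbove j)) := by
      simp only [List.get_eq_getElem, Fin.coe_cast]
      rw [List.getElem_eraseIdx]
      rcases lt_or_ge (j.castSucc) i with hlt | hle
      · rw [dif_pos (by simpa [Fin.lt_def] using hlt)]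
        congr 1
        rw [Fin.succAbove_of_castSucc_lt _ _ hlt]
        rfl
      · rw [dif_neg (by simp only [Fin.le_def, Fin.coe_castSucc] at hle; omega)]
        congr 1
        rw [Fin.succAbove_of_le_castSucc _ _ hle]
        rfl
    rw [← hget]
    rfl
  have : ∑ i : Fin (r + 1), (-1 : F) ^ (i : ℕ) * s F r (v.eraseIdx (i : ℕ)) = 0 := by
    rw [← hdet]
    refine Finset.sum_congr rfl fun i _ => ?_
    rw [hterm i, hB0, mul_one]
  rw [hv]
  calc ∑ i ∈ Finset.range (r + 1), (-1 : F) ^ i * s F r (v.eraseIdx i)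
      = ∑ i : Fin (r + 1), (-1 : F) ^ (i : ℕ) * s F r (v.eraseIdx (i : ℕ)) :=
        (Fin.sum_univ_eq_sum_range (fun i => (-1 : F) ^ i * s F r (v.eraseIdx i)) (r + 1)).symm
    _ = 0 := this

end S17

variable (F : Type) [Field F] (r : ℕ)

/-- Simplices of the bar construction `W(r)` of `Σ_r`. -/
abbrev PermList : Type := List (Equiv.Perm (Fin r))

/-- `(w_0(1),...,w_d(1))` is a permutation of `(1,...,r)`: the simplex has
degree `r-1` (length `r`) and the values on the first element are distinct. -/
def IsPermTuple (hr : 0 < r) (l : PermList r) : Prop :=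
  l.length = r ∧ (l.map fun w => w ⟨0, hr⟩).Nodup

/-- Chains on `W(r)`. -/
abbrev ChW : Type := PermList r →₀ F

/-- The normalized simplicial differential (alternating sum of face maps,
vanishing in degree 0; it moreover preserves the degenerate simplices, on which
any cochain of the above form vanishes). -/
def deltaW : ChW F r →ₗ[F] ChW F r :=
  Finsupp.lift (ChW F r) F (PermList r) fun l =>
    if l.length ≤ 1 then 0
    else ∑ i ∈ Finset.range l.length, ((-1 : F) ^ i) • Finsupp.single (l.eraseIdx i) (1 : F)

theorem statement17 (hr : 0 < r) :
    ∃ sgn : PermList r → F,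
      (∀ l : PermList r, IsPermTuple r hr l → sgn l = 1 ∨ sgn l = -1) ∧
      (∀ l : PermList r, ¬ IsPermTuple r hr l → sgn l = 0) ∧
      -- `ε_r ∘ δ = 0`, where `ε_r` is the linear functional with values `sgn`
      -- on the simplices
      (∀ l : PermList r,
        Finsupp.lift F F (PermList r) sgn (deltaW F r (Finsupp.single l (1 : F))) = 0) := by
  classical
  refine ⟨fun l => S17.s F r (l.map fun w => w ⟨0, hr⟩), ?_, ?_, ?_⟩
  · rintro l ⟨h1, h2⟩
    exact S17.s_pm F r _ (by simpa using h1) h2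
  · intro l hl
    rw [IsPermTuple, not_and_or] at hl
    rcases hl with h | h
    · exact S17.s_zero_of_length_ne F r _ (by simpa using h)
    · exact S17.s_zero_of_not_nodup F r _ h
  · intro l
    have hδ : deltaW F r (Finsupp.single l 1) =
        if l.length ≤ 1 then 0
        else ∑ i ∈ Finset.range l.length, ((-1 : F) ^ i) • Finsupp.single (l.eraseIdx i) (1 : F) := by
      rw [deltaW, Finsupp.lift_apply, Finsupp.sum_single_index (by simp), one_smul]
    rw [hδ]
    by_cases h1 : l.length ≤ 1
    · rw [if_pos h1]; simp
    · rw [if_neg h1]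
      rw [map_sum]
      have hterm : ∀ i, (Finsupp.lift F F (PermList r)
            (fun l => S17.s F r (l.map fun w => w ⟨0, hr⟩)))
            (((-1 : F) ^ i) • Finsupp.single (l.eraseIdx i) (1 : F))
          = (-1 : F) ^ i * S17.s F r ((l.eraseIdx i).map fun w => w ⟨0, hr⟩) := by
        intro i
        rw [map_smul, smul_eq_mul]
        congr 1
        rw [Finsupp.lift_apply, Finsupp.sum_single_index (by simp), one_smul]
      rw [Finset.sum_congr rfl fun i _ => hterm i]
      by_cases h2 : l.length = r + 1
      · have := S17.key F r (l.map fun w => w ⟨0, hr⟩) (by simpa using h2)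
        simp only [List.length_map] at this
        rw [← this]
        exact Finset.sum_congr rfl fun i _ => by
          rw [S17.map_eraseIdx]
      · refine Finset.sum_eq_zero fun i hi => ?_
        rw [Finset.mem_range] at hi
        have : ((l.eraseIdx i).map fun w => w ⟨0, hr⟩).length ≠ r := by
          rw [List.length_map, List.length_eraseIdx, if_pos hi]
          omega
        rw [S17.s_zero_of_length_ne F r _ this, mul_zero]
end
end
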